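/- If a policy π ∈ 𝒫 is ε-optimal at the state x ∈ S, then for each m ∈ ℕ, P_x^π[ J*(λ,X_m) ≤ J*(λ,x) + ε ] = 1. -/

import Mathlib

open scoped Classical BigOperators ENNReal

namespace RiskSensitive

/-- A (history-dependent, randomized) policy for a finite MDP: given the past
(chronological list of (state, action) pairs) and the current state, it assigns a
probability weight to each action, concentrated on the admissible actions. -/
structure Policy (S A : Type*) [Fintype S] [Fintype A] (Adm : S → Finset A) where
  toFun : List (S × A) → S → A → ℝ
  nonneg : ∀ h s a, 0 ≤ toFun h s a
  sum_one : ∀ h s, ∑ a, toFun h s a = 1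
  supp : ∀ h s a, a ∉ Adm s → toFun h s a = 0

variable {S A : Type*} [Fintype S] [Fintype A]
variable (Adm : S → Finset A) (p : S → A → S → ℝ) (C : S → A → ℝ) (lam : ℝ)

/-- Probability of a finite trajectory (list of (action, next-state) pairs), given the
history so far and the current state. -/
noncomputable def pathProbAux (π : Policy S A Adm) :
    List (S × A) → S → List (A × S) → ℝ
  | _, _, [] => 1
  | hist, x, (a, y) :: rest =>
      π.toFun hist x a * p x a y * pathProbAux π (hist ++ [(x, a)]) y rest

/-- `pathProb π x l` is `P_x^π[A_0 = a_0, X_1 = y_1, …]` for `l = [(a_0,y_1),…]`. -/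
noncomputable def pathProb (π : Policy S A Adm) (x : S) (l : List (A × S)) : ℝ :=
  pathProbAux Adm p π [] x l

/-- Probability of a cylinder event depending on the first `n` (action, next-state) pairs. -/
noncomputable def cylProb (π : Policy S A Adm) (x : S) (n : ℕ)
    (E : (Fin n → A × S) → Prop) : ℝ :=
  ∑ v : Fin n → A × S, if E v then pathProb Adm p π x (List.ofFn v) else 0

/-- The state `X_t` along the trajectory encoded by `l`, starting from `x`. -/
def stateAt (x : S) (l : List (A × S)) (t : ℕ) : S :=
  (l.take t).foldl (fun _ q => q.2) x

/-- The final state of the finite trajectory `l` started at `x`. -/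
def lastState (x : S) (l : List (A × S)) : S :=
  l.foldl (fun _ q => q.2) x

/-- `Σ_t w(X_t, A_t)` along the finite trajectory `l` started at `x`. -/
def costSum (w : S → A → ℝ) : S → List (A × S) → ℝ
  | _, [] => 0
  | x, (a, y) :: rest => w x a + costSum w y rest

/-- `J_n(λ,π,x) = (1/λ) log E_x^π[exp(λ Σ_{t<n} C(X_t,A_t))]`. -/
noncomputable def Jn (π : Policy S A Adm) (x : S) (n : ℕ) : ℝ :=
  (1 / lam) * Real.log (∑ v : Fin n → A × S,
    pathProb Adm p π x (List.ofFn v) * Real.exp (lam * costSum C x (List.ofFn v)))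

/-- The risk-sensitive average cost `J(λ,π,x) = limsup_n J_n(λ,π,x)/n`. -/
noncomputable def Javg (π : Policy S A Adm) (x : S) : ℝ :=
  Filter.limsup (fun n : ℕ => Jn Adm p C lam π x n / n) Filter.atTop

/-- Optimal risk-sensitive average cost `J*(λ,x)`. -/
noncomputable def Jopt (x : S) : ℝ :=
  ⨅ π : Policy S A Adm, Javg Adm p C lam π x

/-- `π` is `ε`-optimal at `x`. -/
def EpsOptimalAt (π : Policy S A Adm) (x : S) (ε : ℝ) : Prop :=
  Javg Adm p C lam π x ≤ Jopt Adm p C lam x + ε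

/-- `FirstExit Q v` : the trajectory `v` leaves `{Q}` for the first time exactly at its
last step, i.e. the exit time of `Q` equals `n`. -/
def FirstExit (Q : S → Prop) {n : ℕ} (v : Fin n → A × S) : Prop :=
  0 < n ∧ (∀ t : Fin n, (t : ℕ) + 1 < n → Q (v t).2) ∧
    ∀ t : Fin n, (t : ℕ) + 1 = n → ¬ Q (v t).2

/-- `E_x^π[ exp(Σ_{t<τ} w(X_t,A_t)) ]` where `τ = min{n ≥ 1 : ¬ Q (X_n)}` is the first
exit time from `Q` (the contribution of `[τ = ∞]` is null when `τ < ∞` a.s.). -/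
noncomputable def EexitExp (π : Policy S A Adm) (x : S) (Q : S → Prop)
    (w : S → A → ℝ) : ℝ≥0∞ :=
  ∑' n : ℕ, ∑ v : Fin n → A × S,
    if FirstExit Q v then
      ENNReal.ofReal (pathProb Adm p π x (List.ofFn v) *
        Real.exp (costSum w x (List.ofFn v)))
    else 0

/-- `E_x^π[ exp(Σ_{t<T} w(X_t,A_t)) ]` with `T` the first positive arrival time to `z`. -/
noncomputable def EhitExp (π : Policy S A Adm) (x z : S) (w : S → A → ℝ) : ℝ≥0∞ :=
  EexitExp Adm p π x (fun y => y ≠ z) w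

/-- `E_x^π[T]`, the expected first positive arrival time to `z`, computed as
`Σ_{n≥0} P_x^π[T > n]`. -/
noncomputable def ExpT (π : Policy S A Adm) (x z : S) : ℝ≥0∞ :=
  ∑' n : ℕ, ENNReal.ofReal
    (cylProb Adm p π x n (fun v => ∀ t : Fin n, (v t).2 ≠ z))

/-- `P_x^π[T > n]`, the probability that `z` is not visited during the first `n` steps. -/
noncomputable def survProb (π : Policy S A Adm) (x z : S) (n : ℕ) : ℝ :=
  cylProb Adm p π x n (fun v => ∀ t : Fin n, (v t).2 ≠ z)

/-- The stationary policy induced by a choice function `f ∈ 𝔽`. -/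
noncomputable def stationary (f : S → A) (hf : ∀ s, f s ∈ Adm s) : Policy S A Adm where
  toFun := fun _ s a => if a = f s then 1 else 0
  nonneg := by intro h s a; (try dsimp only); split <;> norm_num
  sum_one := by intro h s; simp
  supp := by
    intro h s a ha
    try dsimp only
    rw [if_neg]
    intro hEq
    exact ha (hEq ▸ hf s)

/-- The simultaneous Doeblin condition: `E_x^f[T] ≤ M` for every state `x` and every
stationary policy `f`, where `T` is the first positive arrival time to `z`. -/
def Doeblin (z : S) (M : ℝ) : Prop :=
  0 < M ∧ ∀ (x : S) (f : S → A) (hf : ∀ s, f s ∈ Adm s),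
    ExpT Adm p (stationary Adm f hf) x z ≤ ENNReal.ofReal M

/-- `B_g(x) = {a ∈ A(x) : g(x) = max{g(y) : p_{xy}(a) > 0}}`. -/
def Bg (g : S → ℝ) (x : S) : Set A :=
  {a | a ∈ Adm x ∧ g x = sSup (g '' {y | 0 < p x a y})}

/-- The family `𝒢` of functions characterizing `J*(λ,·)`. -/
def Gclass : Set (S → ℝ) :=
  {g | (∀ x, g x = sInf ((fun a => sSup (g '' {y | 0 < p x a y})) '' (Adm x : Set A))) ∧
    ∃ h : S → ℝ, ∀ x,
      sInf ((fun a => Real.exp (lam * C x a) * ∑ y, p x a y * Real.exp (lam * h y)) ''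
        Bg Adm p g x) ≤ Real.exp (lam * g x + lam * h x)}

/-- The class `𝒫*` of policies which always select actions in `B*(X_t)`. -/
def Pstar : Set (Policy S A Adm) :=
  {π | ∀ (x : S) (t : ℕ),
    cylProb Adm p π x (t + 1)
      (fun v => (v (Fin.last t)).1 ∈
        Bg Adm p (Jopt Adm p C lam) (stateAt x (List.ofFn v) t)) = 1}

/-- The deviation function
`h(x) = inf_{π ∈ 𝒫*} (1/λ) log E_x^π[exp(λα Σ_{t<T}(C(X_t,A_t) − J*(λ,X_t)))]`. -/
noncomputable def hdev (z : S) (α : ℝ) (x : S) : EReal :=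
  ⨅ π ∈ Pstar Adm p C lam, ((lam⁻¹ : ℝ) : EReal) *
    ENNReal.log (EhitExp Adm p π x z
      (fun s a => lam * α * (C s a - Jopt Adm p C lam s)))

/-- `ψ(ε) = (1/λ) inf_{δ∈𝒫*} log E_z^δ[exp(λ Σ_{t<T}(C(X_t,A_t) − γ₀ − 2ε))]`. -/
noncomputable def psi (z : S) (ε : ℝ) : EReal :=
  ((lam⁻¹ : ℝ) : EReal) * ⨅ π ∈ Pstar Adm p C lam,
    ENNReal.log (EhitExp Adm p π z z
      (fun s a => lam * (C s a - Jopt Adm p C lam z - 2 * ε)))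

/-- `ξ₀ = −(1−α) log β / (λα)`. -/
noncomputable def xi0 (α β : ℝ) : ℝ := -((1 - α) * Real.log β) / (lam * α)

/-- `ξ₁`: 1 if `J*(λ,·)` is constant, otherwise the minimum gap between distinct
values of `J*(λ,·)`. -/
noncomputable def xi1 : ℝ :=
  if ∀ u v : S, Jopt Adm p C lam u = Jopt Adm p C lam v then 1
  else sInf {d | ∃ u v : S, Jopt Adm p C lam u < Jopt Adm p C lam v ∧
    d = Jopt Adm p C lam v - Jopt Adm p C lam u}

/-- `ξ = min{ξ₀, ξ₁}`. -/
noncomputable def xi (α β : ℝ) : ℝ := min (xi0 lam α β) (xi1 Adm p C lam)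

/-- The shifted policy obtained by prefixing the fixed history `pre`. -/
def shiftPolicy (π : Policy S A Adm) (pre : List (S × A)) : Policy S A Adm where
  toFun := fun h s a => π.toFun (pre ++ h) s a
  nonneg := fun h s a => π.nonneg _ s a
  sum_one := fun h s => π.sum_one _ s
  supp := fun h s a ha => π.supp _ s a ha

/-- The history (list of (state, action) pairs) along the trajectory `l` started at `x`. -/
def histOf : S → List (A × S) → List (S × A)
  | _, [] => []
  | x, (a, y) :: rest => (x, a) :: histOf y rest

/-!
Let `u` be a history of length `m` with positive probability under `π` from `x`, ending at
`y`. Continuing `π` after `u` is a policy `π'` from `y`, and keeping only the trajectories that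
start with `u` in the exponential moment of the cost gives
`E_x^π[exp(λ S_{m+n})] ≥ P_x^π(u) exp(λ S(u)) E_y^{π'}[exp(λ S_n)]`.
For `λ > 0` this reads `J_n(π', y) ≤ J_{n+m}(π, x) + const`, so after dividing by `n` and
passing to the limsup, `J*(λ,y) ≤ J(λ,π',y) ≤ J(λ,π,x) ≤ J*(λ,x) + ε`.
-/

open Filter Topology

lemma abs_div_natCast_le {f : ℕ → ℝ} {M : ℝ} (hf : ∀ n, |f n| ≤ n * M) (n : ℕ) :
    |f n / n| ≤ M := by
  have hM : 0 ≤ M := by simpa using (abs_nonneg _).trans (hf 1)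
  rcases Nat.eq_zero_or_pos n with rfl | hn
  · simpa using hM
  · rw [abs_div, Nat.abs_cast, div_le_iff₀ (by exact_mod_cast hn), mul_comm]
    exact hf n

lemma limsup_le_limsup_of_le_shift_add {a b e : ℕ → ℝ} {M : ℝ} (ha : ∀ n, |a n| ≤ M)
    (hb : ∀ n, |b n| ≤ M) (he : Tendsto e atTop (𝓝 0)) {m : ℕ}
    (hle : ∀ᶠ n in atTop, b n ≤ a (n + m) + e n) :
    limsup b atTop ≤ limsup a atTop := by
  refine le_of_forall_pos_le_add fun η hη => ?_
  have hba : ∀ᶠ n in atTop, b n ≤ a (n + m) + η := by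
    filter_upwards [hle, he.eventually_lt_const hη] with n hn hen
    linarith
  have ha_le : ∀ n, a n ≤ M := fun n => (abs_le.1 (ha n)).2
  have ha_ge : ∀ n, -M ≤ a n := fun n => (abs_le.1 (ha n)).1
  calc limsup b atTop ≤ limsup (fun n => a (n + m) + η) atTop :=
        limsup_le_limsup hba (isCoboundedUnder_le_of_le _ fun n => (abs_le.1 (hb n)).1)
          (isBoundedUnder_of ⟨M + η, fun n => by linarith [ha_le (n + m)]⟩)
    _ = limsup (fun n => a (n + m)) atTop + η :=
        limsup_add_const _ _ η (isBoundedUnder_of ⟨M, fun n => ha_le (n + m)⟩)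
          (isCoboundedUnder_le_of_le _ fun n => ha_ge (n + m))
    _ = limsup a atTop + η := by rw [limsup_nat_add a m]

lemma limsup_div_le_limsup_div_of_le_shift {f g : ℕ → ℝ} {M K : ℝ}
    (hf : ∀ n, |f n| ≤ n * M) (hg : ∀ n, |g n| ≤ n * M) {m : ℕ}
    (hle : ∀ n, K + g n ≤ f (n + m)) :
    limsup (fun n => g n / n) atTop ≤ limsup (fun n => f n / n) atTop := by
  refine limsup_le_limsup_of_le_shift_add (abs_div_natCast_le hf) (abs_div_natCast_le hg)
    (tendsto_const_div_atTop_nhds_zero_nat (m * M + |K|)) (m := m) ?_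
  filter_upwards [eventually_ge_atTop 1] with n hn
  have hn : (0 : ℝ) < n := by exact_mod_cast hn
  set t := f (n + m) / ↑(n + m)
  have ht : t ≤ M := (abs_le.1 (abs_div_natCast_le hf (n + m))).2
  have hft : f (n + m) = t * (n + m) := by
    simp only [t]; push_cast; field_simp
  -- `g n ≤ f (n + m) - K = t n + t m - K ≤ t n + (m M + |K|)`
  rw [div_le_iff₀ hn, add_mul, div_mul_cancel₀ _ hn.ne']
  nlinarith [hle n, neg_abs_le K, mul_le_mul_of_nonneg_right ht (Nat.cast_nonneg m)]

lemma abs_log_sum_mul_exp_le {ι : Type*} [Fintype ι] {w f : ι → ℝ} {B : ℝ}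
    (hw : ∀ i, 0 ≤ w i) (hw1 : ∑ i, w i = 1) (hf : ∀ i, |f i| ≤ B) :
    |Real.log (∑ i, w i * Real.exp (f i))| ≤ B := by
  have hlo : Real.exp (-B) ≤ ∑ i, w i * Real.exp (f i) := by
    calc Real.exp (-B) = ∑ i, w i * Real.exp (-B) := by rw [← Finset.sum_mul, hw1, one_mul]
      _ ≤ _ := Finset.sum_le_sum fun i _ => mul_le_mul_of_nonneg_left
          (Real.exp_le_exp.2 (abs_le.1 (hf i)).1) (hw i)
  have hhi : ∑ i, w i * Real.exp (f i) ≤ Real.exp B := by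
    calc ∑ i, w i * Real.exp (f i) ≤ ∑ i, w i * Real.exp B :=
          Finset.sum_le_sum fun i _ => mul_le_mul_of_nonneg_left
            (Real.exp_le_exp.2 (abs_le.1 (hf i)).2) (hw i)
      _ = Real.exp B := by rw [← Finset.sum_mul, hw1, one_mul]
  have hpos := (Real.exp_pos _).trans_le hlo
  exact abs_le.2 ⟨(Real.le_log_iff_exp_le hpos).2 hlo, (Real.log_le_iff_le_exp hpos).2 hhi⟩

lemma sum_mul_exp_pos {ι : Type*} [Fintype ι] {w : ι → ℝ} (f : ι → ℝ)
    (hw : ∀ i, 0 ≤ w i) (hw1 : ∑ i, w i = 1) : 0 < ∑ i, w i * Real.exp (f i) := by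
  obtain ⟨i, -, hi⟩ := Finset.exists_lt_of_sum_lt (s := Finset.univ) (f := 0) (g := w)
    (by simp [hw1])
  exact Finset.sum_pos' (fun j _ => mul_nonneg (hw j) (Real.exp_pos _).le)
    ⟨i, Finset.mem_univ i, mul_pos hi (Real.exp_pos _)⟩

lemma sum_ofFn_succ {β M : Type*} [Fintype β] [AddCommMonoid M] (n : ℕ) (F : List β → M) :
    ∑ v : Fin (n + 1) → β, F (List.ofFn v) =
      ∑ q : β, ∑ w : Fin n → β, F (q :: List.ofFn w) := by
  rw [← Fintype.sum_prod_type', ← Fintype.sum_equiv (Fin.consEquiv fun _ => β)]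
  intro qw
  simp [Fin.consEquiv, List.ofFn_succ]

lemma sum_ofFn_add {β M : Type*} [Fintype β] [AddCommMonoid M] (m n : ℕ) (F : List β → M) :
    ∑ v : Fin (m + n) → β, F (List.ofFn v) =
      ∑ u : Fin m → β, ∑ w : Fin n → β, F (List.ofFn u ++ List.ofFn w) := by
  rw [← Fintype.sum_prod_type', ← Fintype.sum_equiv (Fin.appendEquiv m n)]
  intro uw
  simp [Fin.appendEquiv, List.ofFn_fin_append]

def IsStochastic : Prop := ∀ x, ∀ a ∈ Adm x, (∀ y, 0 ≤ p x a y) ∧ ∑ y, p x a y = 1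

noncomputable def costMgf (π : Policy S A Adm) (x : S) (n : ℕ) : ℝ :=
  ∑ v : Fin n → A × S,
    pathProb Adm p π x (List.ofFn v) * Real.exp (lam * costSum C x (List.ofFn v))

section

variable {Adm p C lam}

lemma pathProbAux_nonneg (hp : IsStochastic Adm p)
    (π : Policy S A Adm) (l : List (A × S)) (hist : List (S × A)) (x : S) :
    0 ≤ pathProbAux Adm p π hist x l := by
  induction l generalizing hist x with
  | nil => simp [pathProbAux]
  | cons q rest ih =>
    obtain ⟨a, y⟩ := q
    by_cases h : a ∈ Adm x
    · exact mul_nonneg (mul_nonneg (π.nonneg _ _ _) ((hp x a h).1 y)) (ih _ _)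
    · simp [pathProbAux, π.supp hist x a h]

lemma sum_pathProbAux_eq_one (hp : IsStochastic Adm p)
    (π : Policy S A Adm) (n : ℕ) (hist : List (S × A)) (x : S) :
    ∑ v : Fin n → A × S, pathProbAux Adm p π hist x (List.ofFn v) = 1 := by
  induction n generalizing hist x with
  | zero => simp [pathProbAux]
  | succ n ih =>
    have hstep : ∀ a, ∑ y, π.toFun hist x a * p x a y = π.toFun hist x a := fun a => by
      by_cases h : a ∈ Adm x
      · rw [← Finset.mul_sum, (hp x a h).2, mul_one]
      · simp [π.supp hist x a h]
    simp only [sum_ofFn_succ, pathProbAux, ← Finset.mul_sum, ih, mul_one]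
    rw [Fintype.sum_prod_type]
    simp only [hstep, π.sum_one]

lemma pathProbAux_append (π : Policy S A Adm) (l₁ l₂ : List (A × S)) (hist : List (S × A))
    (x : S) :
    pathProbAux Adm p π hist x (l₁ ++ l₂) = pathProbAux Adm p π hist x l₁ *
      pathProbAux Adm p π (hist ++ histOf x l₁) (lastState x l₁) l₂ := by
  induction l₁ generalizing hist x with
  | nil => simp [pathProbAux, histOf, lastState]
  | cons q rest ih =>
    obtain ⟨a, y⟩ := q
    simp only [List.cons_append, pathProbAux, histOf, ih, List.append_assoc, List.nil_append,
      lastState, List.foldl_cons]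
    ring

lemma pathProbAux_shiftPolicy (π : Policy S A Adm) (pre hist : List (S × A)) (x : S)
    (l : List (A × S)) :
    pathProbAux Adm p (shiftPolicy Adm π pre) hist x l =
      pathProbAux Adm p π (pre ++ hist) x l := by
  induction l generalizing hist x with
  | nil => rfl
  | cons q rest ih =>
    obtain ⟨a, y⟩ := q
    simp only [pathProbAux, ih, List.append_assoc]
    rfl

lemma costSum_append {S A : Type*} (w : S → A → ℝ) (l₁ l₂ : List (A × S)) (x : S) :
    costSum w x (l₁ ++ l₂) = costSum w x l₁ + costSum w (lastState x l₁) l₂ := by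
  induction l₁ generalizing x with
  | nil => simp [costSum, lastState]
  | cons q rest ih =>
    obtain ⟨a, y⟩ := q
    simp only [List.cons_append, costSum, ih, lastState, List.foldl_cons]
    ring

lemma abs_costSum_le {S A : Type*} {w : S → A → ℝ} {M : ℝ} (hw : ∀ s a, |w s a| ≤ M)
    (x : S) (l : List (A × S)) : |costSum w x l| ≤ l.length * M := by
  induction l generalizing x with
  | nil => simp [costSum]
  | cons q rest ih =>
    obtain ⟨a, y⟩ := q
    calc |w x a + costSum w y rest| ≤ M + rest.length * M :=
          (abs_add_le _ _).trans (add_le_add (hw x a) (ih y))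
      _ = _ := by simp only [List.length_cons]; push_cast; ring

lemma stateAt_ofFn {S A : Type*} {m : ℕ} (x : S) (v : Fin m → A × S) :
    stateAt x (List.ofFn v) m = lastState x (List.ofFn v) := by
  rw [stateAt, List.take_of_length_le (by simp), lastState]

lemma cylProb_eq_one_of_forall_pos (hp : IsStochastic Adm p) (π : Policy S A Adm) (x : S)
    {n : ℕ} {E : (Fin n → A × S) → Prop}
    (hE : ∀ v, 0 < pathProb Adm p π x (List.ofFn v) → E v) : cylProb Adm p π x n E = 1 := by
  rw [cylProb, ← sum_pathProbAux_eq_one hp π n [] x]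
  refine Finset.sum_congr rfl fun v _ => ?_
  by_cases hv : E v
  · rw [if_pos hv, pathProb]
  · rw [if_neg hv]
    exact (pathProbAux_nonneg hp π _ [] x).eq_or_lt.resolve_right fun h => hv (hE v h)

lemma costMgf_pos (hp : IsStochastic Adm p) (π : Policy S A Adm) (x : S) (n : ℕ) :
    0 < costMgf Adm p C lam π x n :=
  sum_mul_exp_pos _ (fun _ => pathProbAux_nonneg hp π _ [] x) (sum_pathProbAux_eq_one hp π n [] x)

lemma abs_Jn_le (hp : IsStochastic Adm p) (hlam : 0 < lam) {M : ℝ} (hM : ∀ s a, |C s a| ≤ M)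
    (π : Policy S A Adm) (x : S) (n : ℕ) : |Jn Adm p C lam π x n| ≤ n * M := by
  have hlog : |Real.log (costMgf Adm p C lam π x n)| ≤ lam * (n * M) := by
    refine abs_log_sum_mul_exp_le (fun v => pathProbAux_nonneg hp π _ [] x)
      (sum_pathProbAux_eq_one hp π n [] x) fun v => ?_
    rw [abs_mul, abs_of_pos hlam]
    exact mul_le_mul_of_nonneg_left (by simpa using abs_costSum_le hM x (List.ofFn v)) hlam.le
  calc |Jn Adm p C lam π x n| = lam⁻¹ * |Real.log (costMgf Adm p C lam π x n)| := by
        rw [Jn, abs_mul, one_div, abs_inv, abs_of_pos hlam]; rfl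
    _ ≤ lam⁻¹ * (lam * (n * M)) := mul_le_mul_of_nonneg_left hlog (inv_nonneg.2 hlam.le)
    _ = n * M := by field_simp

lemma exists_abs_Jn_le (hp : IsStochastic Adm p) (hlam : 0 < lam) :
    ∃ M, ∀ π x n, |Jn Adm p C lam π x n| ≤ n * M := by
  obtain ⟨M, hM⟩ := Finite.exists_le fun sa : S × A => |C sa.1 sa.2|
  exact ⟨M, abs_Jn_le hp hlam fun s a => hM (s, a)⟩

lemma Jopt_le_Javg (hp : IsStochastic Adm p) (hlam : 0 < lam) (π : Policy S A Adm) (x : S) :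
    Jopt Adm p C lam x ≤ Javg Adm p C lam π x := by
  obtain ⟨M, hM⟩ := exists_abs_Jn_le hp hlam
  refine ciInf_le ⟨-M, ?_⟩ π
  rintro _ ⟨ρ, rfl⟩
  have hbd := abs_div_natCast_le (hM ρ x)
  exact le_limsup_of_frequently_le (Frequently.of_forall fun n => (abs_le.1 (hbd n)).1)
    (isBoundedUnder_of ⟨M, fun n => (abs_le.1 (hbd n)).2⟩)

lemma pathProb_append_mul_exp (π : Policy S A Adm) (x : S) (u w : List (A × S)) :
    pathProb Adm p π x (u ++ w) * Real.exp (lam * costSum C x (u ++ w)) =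
      pathProb Adm p π x u * Real.exp (lam * costSum C x u) *
        (pathProb Adm p (shiftPolicy Adm π (histOf x u)) (lastState x u) w *
          Real.exp (lam * costSum C (lastState x u) w)) := by
  rw [pathProb, pathProbAux_append, costSum_append, pathProb, pathProb, pathProbAux_shiftPolicy,
    List.append_nil, List.nil_append, mul_add, Real.exp_add]
  ring

lemma mul_costMgf_shiftPolicy_le (hp : IsStochastic Adm p) (π : Policy S A Adm) (x : S) {m : ℕ}
    (u : Fin m → A × S) (n : ℕ) :
    pathProb Adm p π x (List.ofFn u) * Real.exp (lam * costSum C x (List.ofFn u)) *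
        costMgf Adm p C lam (shiftPolicy Adm π (histOf x (List.ofFn u)))
          (lastState x (List.ofFn u)) n ≤
      costMgf Adm p C lam π x (m + n) := by
  let F : List (A × S) → ℝ := fun l => pathProb Adm p π x l * Real.exp (lam * costSum C x l)
  have hF : ∀ l, 0 ≤ F l := fun l =>
    mul_nonneg (pathProbAux_nonneg hp π l [] x) (Real.exp_pos _).le
  calc _ = ∑ w : Fin n → A × S, F (List.ofFn u ++ List.ofFn w) := by
        simp only [costMgf, Finset.mul_sum, F, pathProb_append_mul_exp]
    _ ≤ ∑ u' : Fin m → A × S, ∑ w : Fin n → A × S, F (List.ofFn u' ++ List.ofFn w) :=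
        Finset.single_le_sum
          (f := fun u' => ∑ w : Fin n → A × S, F (List.ofFn u' ++ List.ofFn w))
          (fun _ _ => Finset.sum_nonneg fun _ _ => hF _) (Finset.mem_univ u)
    _ = costMgf Adm p C lam π x (m + n) := (sum_ofFn_add m n F).symm

lemma Javg_shiftPolicy_le (hp : IsStochastic Adm p) (hlam : 0 < lam) (π : Policy S A Adm) (x : S)
    {m : ℕ} (u : Fin m → A × S) (hu : 0 < pathProb Adm p π x (List.ofFn u)) :
    Javg Adm p C lam (shiftPolicy Adm π (histOf x (List.ofFn u))) (lastState x (List.ofFn u)) ≤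
      Javg Adm p C lam π x := by
  set π' := shiftPolicy Adm π (histOf x (List.ofFn u))
  set y := lastState x (List.ofFn u)
  set c := pathProb Adm p π x (List.ofFn u) * Real.exp (lam * costSum C x (List.ofFn u))
  have hc : 0 < c := mul_pos hu (Real.exp_pos _)
  obtain ⟨M, hM⟩ := exists_abs_Jn_le hp hlam
  refine limsup_div_le_limsup_div_of_le_shift (hM π x) (hM π' y) (K := 1 / lam * Real.log c)
    (m := m) fun n => ?_
  have hmgf : 0 < costMgf Adm p C lam π' y n := costMgf_pos hp π' y n
  calc _ = 1 / lam * Real.log (c * costMgf Adm p C lam π' y n) := by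
        rw [Real.log_mul hc.ne' hmgf.ne', mul_add]; rfl
    _ ≤ 1 / lam * Real.log (costMgf Adm p C lam π x (m + n)) :=
        mul_le_mul_of_nonneg_left (Real.log_le_log (mul_pos hc hmgf)
          (mul_costMgf_shiftPolicy_le hp π x u n)) (one_div_nonneg.2 hlam.le)
    _ = Jn Adm p C lam π x (n + m) := by rw [add_comm m n]; rfl

end

theorem Jopt_dominated_as
    (hp : ∀ (x : S), ∀ a ∈ Adm x, (∀ y, 0 ≤ p x a y) ∧ (∑ y, p x a y) = 1)
    (hlam : 0 < lam)
    (ε : ℝ) (x : S) (π : Policy S A Adm)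
    (hopt : EpsOptimalAt Adm p C lam π x ε) (m : ℕ) :
    cylProb Adm p π x m
      (fun v => Jopt Adm p C lam (stateAt x (List.ofFn v) m) ≤
        Jopt Adm p C lam x + ε) = 1 := by
  refine cylProb_eq_one_of_forall_pos hp π x fun v hv => ?_
  rw [stateAt_ofFn]
  exact ((Jopt_le_Javg hp hlam _ _).trans (Javg_shiftPolicy_le hp hlam π x v hv)).trans hopt

end RiskSensitive
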